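/- arXiv:2110.14313 — 7 statements merged into one kernel-verified Lean document; each statement's English description precedes it below -/
import Mathlib

section
/- Let L be a locally compact Hausdorff space. The Banach space C₀(L) of continuous real-valued functions on L vanishing at infinity, with the supremum norm, is almost square if and only if L is not compact. -/
/-- A Banach space is almost square (ASQ). -/
def AlmostSquare (X : Type*) [NormedAddCommGroup X] : Prop :=
  ∀ ε > (0 : ℝ), ∀ (n : ℕ) (f : Fin n → X), (∀ i, ‖f i‖ = 1) →
    ∃ g : X, ‖g‖ = 1 ∧ ∀ i, ‖f i + g‖ ≤ 1 + ε ∧ ‖f i - g‖ ≤ 1 + ε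

lemma zai_norm_le {L : Type*} [TopologicalSpace L] (f : ZeroAtInftyContinuousMap L ℝ)
    {C : ℝ} (hC : 0 ≤ C) (h : ∀ t, |f t| ≤ C) : ‖f‖ ≤ C := by
  rw [← ZeroAtInftyContinuousMap.norm_toBCF_eq_norm]
  exact (BoundedContinuousFunction.norm_le hC).2 (by simpa using h)

lemma zai_le_norm {L : Type*} [TopologicalSpace L] (f : ZeroAtInftyContinuousMap L ℝ)
    (t : L) : |f t| ≤ ‖f‖ := by
  rw [← ZeroAtInftyContinuousMap.norm_toBCF_eq_norm]
  simpa using f.toBCF.norm_coe_le_norm t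

theorem stmt1 {L : Type*} [TopologicalSpace L] [LocallyCompactSpace L] [T2Space L] :
    AlmostSquare (ZeroAtInftyContinuousMap L ℝ) ↔ ¬ CompactSpace L := by
  constructor
  · intro hA hC
    cases isEmpty_or_nonempty L with
    | inl hemp =>
      obtain ⟨g, hg1, -⟩ := hA 1 one_pos 0 (fun i => i.elim0) (fun i => i.elim0)
      have : ‖g‖ ≤ 0 := zai_norm_le g le_rfl (fun t => (IsEmpty.false t).elim)
      linarith
    | inr hne =>
      set f₀ : ZeroAtInftyContinuousMap L ℝ :=
        ⟨ContinuousMap.const L 1, by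
          rw [Filter.cocompact_eq_bot]; exact Filter.tendsto_bot⟩ with hf₀
      have hf₀t : ∀ t, f₀ t = 1 := fun t => rfl
      have hf₀n : ‖f₀‖ = 1 := by
        refine le_antisymm (zai_norm_le f₀ one_pos.le fun t => by rw [hf₀t]; norm_num) ?_
        obtain ⟨t⟩ := hne
        have := zai_le_norm f₀ t
        rw [hf₀t] at this
        simpa using this
      obtain ⟨g, hg1, hg⟩ := hA (1/2) (by norm_num) 1 (fun _ => f₀) (fun _ => hf₀n)
      obtain ⟨h₁, h₂⟩ := hg 0
      have hgle : ‖g‖ ≤ 1/2 := by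
        refine zai_norm_le g (by norm_num) fun t => ?_
        have e₁ : |1 + g t| ≤ 1 + 1/2 := by
          calc |1 + g t| = |(f₀ + g) t| := by
                simp only [ZeroAtInftyContinuousMap.coe_add, Pi.add_apply, hf₀t]
            _ ≤ ‖f₀ + g‖ := zai_le_norm _ t
            _ ≤ 1 + 1/2 := h₁
        have e₂ : |1 - g t| ≤ 1 + 1/2 := by
          calc |1 - g t| = |(f₀ - g) t| := by
                simp only [ZeroAtInftyContinuousMap.coe_sub, Pi.sub_apply, hf₀t]
            _ ≤ ‖f₀ - g‖ := zai_le_norm _ t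
            _ ≤ 1 + 1/2 := h₂
        rw [abs_le] at e₁ e₂ ⊢
        constructor <;> linarith [e₁.1, e₁.2, e₂.1, e₂.2]
      rw [hg1] at hgle; linarith
  · intro hnc
    intro ε hε n f hf
    -- for each i get a compact set outside which |f i| < ε
    have hK : ∀ i : Fin n, ∃ K : Set L, IsCompact K ∧ ∀ t ∉ K, |f i t| < ε := by
      intro i
      have := (f i).zero_at_infty'
        (Metric.ball_mem_nhds (0 : ℝ) hε)
      rw [Filter.mem_map, Filter.mem_cocompact] at this
      obtain ⟨K, hKc, hKs⟩ := this
      refine ⟨K, hKc, fun t ht => ?_⟩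
      have := hKs ht
      simpa [Real.dist_eq] using this
    choose K hKc hKlt using hK
    set Ku : Set L := ⋃ i, K i with hKu
    have hKuc : IsCompact Ku := isCompact_iUnion hKc
    have hKucl : IsClosed Ku := hKuc.isClosed
    -- pick a point outside Ku
    have hex : ∃ t₀, t₀ ∉ Ku := by
      by_contra hcon
      push_neg at hcon
      exact hnc ⟨by
        have : Ku = Set.univ := Set.eq_univ_of_forall hcon
        rw [← this]; exact hKuc⟩
    obtain ⟨t₀, ht₀⟩ := hex
    obtain ⟨g, hg1, hg0, hgsupp, hgmem⟩ :=
      exists_continuous_one_zero_of_isCompact (isCompact_singleton (x := t₀)) hKucl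
        (Set.disjoint_singleton_left.mpr ht₀)
    set h : ZeroAtInftyContinuousMap L ℝ := ⟨g, hgsupp.is_zero_at_infty⟩ with hh
    have hht : ∀ t, h t = g t := fun t => rfl
    have hhabs : ∀ t, |h t| ≤ 1 := by
      intro t
      rw [hht, abs_le]
      exact ⟨by linarith [(hgmem t).1], (hgmem t).2⟩
    have hhn : ‖h‖ = 1 := by
      refine le_antisymm (zai_norm_le h one_pos.le hhabs) ?_
      have := zai_le_norm h t₀
      rw [hht, hg1 rfl] at this
      simpa using this
    refine ⟨h, hhn, fun i => ?_⟩
    have key : ∀ (s : ℝ), s = 1 ∨ s = -1 → ‖f i + s • h‖ ≤ 1 + ε := by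
      intro s hs
      refine zai_norm_le _ (by linarith) fun t => ?_
      have habs : |s| = 1 := by rcases hs with h | h <;> simp [h]
      simp only [ZeroAtInftyContinuousMap.coe_add, Pi.add_apply,
        ZeroAtInftyContinuousMap.coe_smul, Pi.smul_apply, smul_eq_mul]
      by_cases htK : t ∈ Ku
      · have : g t = 0 := hg0 htK
        rw [hht, this, mul_zero, add_zero]
        calc |f i t| ≤ ‖f i‖ := zai_le_norm _ t
          _ = 1 := hf i
          _ ≤ 1 + ε := by linarith
      · have h1 : |f i t| < ε := hKlt i t (fun hmem => htK (Set.mem_iUnion.mpr ⟨i, hmem⟩))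
        calc |f i t + s * h t| ≤ |f i t| + |s * h t| := abs_add_le _ _
          _ ≤ ε + 1 := by
              have : |s * h t| ≤ 1 := by
                rw [abs_mul, habs, one_mul]; exact hhabs t
              linarith
          _ = 1 + ε := by ring
    constructor
    · have := key 1 (Or.inl rfl)
      simpa using this
    · have := key (-1) (Or.inr rfl)
      rw [show ((-1 : ℝ) • h) = -h from neg_one_smul ℝ h] at this
      simpa [sub_eq_add_neg] using this
end

section
/- Let L be a non-compact locally compact Hausdorff space, let f₁, …, fₙ be functions in the unit sphere of C₀(L), and let ε > 0. Then there exists g ∈ C₀(L) with ‖g‖ = 1, 0 ≤ g ≤ 1, such that ‖fᵢ + g‖ ≤ 1 + ε for every i = 1, …, n. -/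
open Filter Set

theorem stmt2 {L : Type*} [TopologicalSpace L] [LocallyCompactSpace L] [T2Space L]
    [NoncompactSpace L] (n : ℕ) (f : Fin n → ZeroAtInftyContinuousMap L ℝ)
    (hf : ∀ i, ‖f i‖ = 1) (ε : ℝ) (hε : 0 < ε) :
    ∃ g : ZeroAtInftyContinuousMap L ℝ, ‖g‖ = 1 ∧ (∀ t, 0 ≤ g t ∧ g t ≤ 1) ∧
      ∀ i, ‖f i + g‖ ≤ 1 + ε := by
  -- find a compact set outside of which all |f i| ≤ ε
  have hmem : {t : L | ∀ i, |f i t| ≤ ε} ∈ cocompact L := by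
    have : ∀ i : Fin n, {t : L | |f i t| ≤ ε} ∈ cocompact L := by
      intro i
      have := (zero_at_infty (f i)).eventually
        (Metric.closedBall_mem_nhds (0 : ℝ) hε)
      exact (by simpa [Real.dist_eq] using this : ∀ᶠ x in cocompact L, |f i x| ≤ ε)
    exact Filter.eventually_all.2 this
  obtain ⟨K, hKc, hKsub⟩ := mem_cocompact.mp hmem
  -- pick a point outside K
  obtain ⟨p, hp⟩ : ∃ p : L, p ∉ K := by
    by_contra h
    push_neg at h
    have : K = Set.univ := Set.eq_univ_of_forall h
    exact NoncompactSpace.noncompact_univ (this ▸ hKc)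
  -- Urysohn function: 1 at p, 0 on K
  obtain ⟨g₀, hg1, hg0, hgc, hg01⟩ :=
    exists_continuous_one_zero_of_isCompact (isCompact_singleton (x := p))
      hKc.isClosed (Set.disjoint_singleton_left.mpr hp)
  set g : ZeroAtInftyContinuousMap L ℝ :=
    ⟨g₀, hgc.is_zero_at_infty⟩ with hg
  have hgcoe : ∀ t, g t = g₀ t := fun t => rfl
  have hbound : ∀ t, 0 ≤ g t ∧ g t ≤ 1 := fun t => ⟨(hg01 t).1, (hg01 t).2⟩
  have hnorm_le : ∀ (h : ZeroAtInftyContinuousMap L ℝ) (C : ℝ), 0 ≤ C →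
      (∀ t, |h t| ≤ C) → ‖h‖ ≤ C := by
    intro h C hC hb
    rw [← ZeroAtInftyContinuousMap.norm_toBCF_eq_norm]
    exact BoundedContinuousFunction.norm_le hC |>.2 (by simpa [Real.norm_eq_abs] using hb)
  refine ⟨g, ?_, hbound, ?_⟩
  · apply le_antisymm
    · exact hnorm_le g 1 zero_le_one fun t =>
        abs_le.mpr ⟨by linarith [(hbound t).1], (hbound t).2⟩
    · have : g p = 1 := hg1 rfl
      calc (1 : ℝ) = |g p| := by rw [this]; simp
        _ = ‖g.toBCF p‖ := by rw [Real.norm_eq_abs]; rfl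
        _ ≤ ‖g.toBCF‖ := g.toBCF.norm_coe_le_norm p
        _ = ‖g‖ := ZeroAtInftyContinuousMap.norm_toBCF_eq_norm
  · intro i
    apply hnorm_le _ _ (by linarith)
    intro t
    by_cases ht : t ∈ K
    · have hgt : g t = 0 := hg0 ht
      have : |f i t| ≤ 1 := by
        calc |f i t| = ‖(f i).toBCF t‖ := by rw [Real.norm_eq_abs]; rfl
          _ ≤ ‖(f i).toBCF‖ := (f i).toBCF.norm_coe_le_norm t
          _ = 1 := by rw [ZeroAtInftyContinuousMap.norm_toBCF_eq_norm]; exact hf i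
      simp only [ZeroAtInftyContinuousMap.add_apply, hgt, add_zero]
      linarith
    · have hft : |f i t| ≤ ε := hKsub (by simpa using ht) i
      have := (hbound t)
      simp only [ZeroAtInftyContinuousMap.add_apply]
      have : |f i t + g t| ≤ |f i t| + |g t| := abs_add_le _ _
      have hgabs : |g t| ≤ 1 := abs_le.mpr ⟨by linarith [(hbound t).1], (hbound t).2⟩
      linarith
end

section
/- Let L be a locally compact Hausdorff space. Then C₀(L) is sequentially almost square if and only if L admits a compact escaping sequence, i.e., a sequence (Uₙ) of nonempty open subsets of L such that for every compact K ⊆ L there exists m with Uₙ ∩ K = ∅ for all n ≥ m. -/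
open Filter Topology Set

set_option linter.unusedSectionVars false

/-- A Banach space is sequentially almost square. -/
def SeqAlmostSquare (X : Type*) [NormedAddCommGroup X] : Prop :=
  ∃ x : ℕ → X, (∀ n, ‖x n‖ = 1) ∧
    ∀ v : X, Tendsto (fun n => ‖v + x n‖) atTop (𝓝 (max ‖v‖ 1))

/-- A compact escaping sequence of nonempty open sets. -/
def CompactEscaping {L : Type*} [TopologicalSpace L] (U : ℕ → Set L) : Prop :=
  (∀ n, IsOpen (U n) ∧ (U n).Nonempty) ∧
    ∀ K : Set L, IsCompact K → ∃ m, ∀ n ≥ m, U n ∩ K = ∅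

section aux
variable {L : Type*} [TopologicalSpace L] [LocallyCompactSpace L] [T2Space L]

lemma abs_apply_le_norm (f : ZeroAtInftyContinuousMap L ℝ) (t : L) : |f t| ≤ ‖f‖ := by
  rw [← ZeroAtInftyContinuousMap.norm_toBCF_eq_norm]
  exact f.toBCF.norm_coe_le_norm t

lemma norm_le_of {f : ZeroAtInftyContinuousMap L ℝ} {C : ℝ} (hC : 0 ≤ C)
    (h : ∀ t, |f t| ≤ C) : ‖f‖ ≤ C := by
  rw [← ZeroAtInftyContinuousMap.norm_toBCF_eq_norm]
  exact (BoundedContinuousFunction.norm_le hC).2 h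

lemma exists_abs_gt {f : ZeroAtInftyContinuousMap L ℝ} {C : ℝ} (hC : 0 ≤ C)
    (h : C < ‖f‖) : ∃ t, C < |f t| := by
  by_contra hcon
  push_neg at hcon
  exact absurd (norm_le_of hC hcon) (not_le.2 h)
end aux

theorem stmt3 {L : Type*} [TopologicalSpace L] [LocallyCompactSpace L] [T2Space L] :
    SeqAlmostSquare (ZeroAtInftyContinuousMap L ℝ) ↔ ∃ U : ℕ → Set L, CompactEscaping U := by
  constructor
  · rintro ⟨x, hx1, hx2⟩
    refine ⟨fun n => {t | (1:ℝ)/2 < |x n t|}, fun n => ⟨?_, ?_⟩, ?_⟩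
    · exact isOpen_lt continuous_const ((map_continuous (x n)).abs)
    · obtain ⟨t, ht⟩ := exists_abs_gt (f := x n) (C := (1:ℝ)/2) (by norm_num)
        (by rw [hx1 n]; norm_num)
      exact ⟨t, ht⟩
    · intro K hK
      by_contra hcon
      push_neg at hcon
      obtain ⟨v, hv1, -, hvsupp, hvrange⟩ :=
        exists_continuous_one_zero_of_isCompact hK isClosed_empty (disjoint_empty K)
      set V : ZeroAtInftyContinuousMap L ℝ := ⟨v, hvsupp.is_zero_at_infty⟩ with hV
      have hVnorm : ‖V‖ ≤ 1 := norm_le_of zero_le_one (fun t => by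
        have h := hvrange t
        show |v t| ≤ 1
        rw [abs_le]; exact ⟨by linarith [h.1], h.2⟩)
      have h1 : ∀ᶠ n in atTop, ‖V + x n‖ < 3/2 := by
        have h := hx2 V
        rw [max_eq_right hVnorm] at h
        exact h.eventually_lt_const (by norm_num)
      have h2 : ∀ᶠ n in atTop, ‖-V + x n‖ < 3/2 := by
        have h := hx2 (-V)
        rw [max_eq_right (by rwa [norm_neg])] at h
        exact h.eventually_lt_const (by norm_num)
      obtain ⟨m, hm⟩ := eventually_atTop.1 (h1.and h2)
      obtain ⟨n, hnm, t, ht⟩ := hcon m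
      obtain ⟨hm1, hm2⟩ := hm n hnm
      have htU : (1:ℝ)/2 < |x n t| := ht.1
      have htK : v t = 1 := hv1 ht.2
      rcases abs_lt.1 (lt_of_le_of_lt (abs_apply_le_norm (V + x n) t)
        (by simpa using hm1)) with ⟨hL1, hL2⟩
      rcases abs_lt.1 (lt_of_le_of_lt (abs_apply_le_norm (-V + x n) t)
        (by simpa using hm2)) with ⟨hL3, hL4⟩
      have e1 : (V + x n) t = 1 + x n t := by
        show V t + x n t = 1 + x n t
        rw [show V t = v t from rfl, htK]
      have e2 : (-V + x n) t = -1 + x n t := by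
        show -(V t) + x n t = -1 + x n t
        rw [show V t = v t from rfl, htK]
      rw [e1] at hL1 hL2; rw [e2] at hL3 hL4
      rcases lt_abs.1 htU with h | h
      · linarith
      · linarith
  · rintro ⟨U, hUopen, hUesc⟩
    choose p hp using fun n => (hUopen n).2
    have hf : ∀ n, ∃ f : C(L, ℝ), EqOn f 1 {p n} ∧ EqOn f 0 (U n)ᶜ ∧
        HasCompactSupport f ∧ ∀ t, f t ∈ Icc (0:ℝ) 1 :=
      fun n => exists_continuous_one_zero_of_isCompact isCompact_singleton
        (hUopen n).1.isClosed_compl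
        (disjoint_compl_right_iff_subset.2 (singleton_subset_iff.2 (hp n)))
    choose f hf1 hf0 hfsupp hfrange using hf
    set x : ℕ → ZeroAtInftyContinuousMap L ℝ :=
      fun n => ⟨f n, (hfsupp n).is_zero_at_infty⟩ with hx
    have hxapp : ∀ n t, x n t = f n t := fun _ _ => rfl
    have hsupp : ∀ n t, t ∉ U n → f n t = 0 := fun n t ht => hf0 n ht
    have hxnorm : ∀ n, ‖x n‖ = 1 := by
      intro n
      refine le_antisymm (norm_le_of zero_le_one (fun t => ?_)) ?_
      · have h := hfrange n t
        rw [hxapp, abs_le]; exact ⟨by linarith [h.1], h.2⟩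
      · calc (1:ℝ) = |x n (p n)| := by
              rw [hxapp, hf1 n (mem_singleton _)]; norm_num
          _ ≤ ‖x n‖ := abs_apply_le_norm _ _
    refine ⟨x, hxnorm, fun v => ?_⟩
    rw [Metric.tendsto_atTop]
    intro ε hε
    set δ : ℝ := min (ε/2) (1/2) with hδdef
    have hδpos : 0 < δ := lt_min (by linarith) (by norm_num)
    have hδε : δ < ε := lt_of_le_of_lt (min_le_left _ _) (by linarith)
    have hδhalf : δ ≤ 1/2 := min_le_right _ _
    -- the compact set where |v| is at least δ
    have hco := ZeroAtInftyContinuousMapClass.zero_at_infty v (Metric.ball_mem_nhds 0 hδpos)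
    rw [mem_map, mem_cocompact] at hco
    obtain ⟨C, hCcomp, hCsub⟩ := hco
    set K : Set L := {t | δ ≤ |v t|} ∩ closure C with hK
    have hKcomp : IsCompact K :=
      (hCcomp.closure).of_isClosed_subset
        ((isClosed_le continuous_const (map_continuous v).abs).inter isClosed_closure)
        (inter_subset_right)
    have hKmem : ∀ t, δ ≤ |v t| → t ∈ K := by
      intro t ht
      refine ⟨ht, subset_closure ?_⟩
      by_contra htC
      have := hCsub htC
      rw [mem_preimage, Metric.mem_ball, dist_zero_right, Real.norm_eq_abs] at this
      linarith
    obtain ⟨m, hm⟩ := hUesc K hKcomp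
    refine ⟨m, fun n hn => ?_⟩
    have hdisj := hm n hn
    have hnotK : ∀ t ∈ U n, |v t| < δ := by
      intro t ht
      by_contra hc
      push_neg at hc
      have : t ∈ U n ∩ K := ⟨ht, hKmem t hc⟩
      rw [hdisj] at this
      exact this
    set M : ℝ := max ‖v‖ 1 with hM
    have hM1 : 1 ≤ M := le_max_right _ _
    have hMv : ‖v‖ ≤ M := le_max_left _ _
    -- upper bound
    have hub : ‖v + x n‖ ≤ M + δ := by
      refine norm_le_of (by linarith) (fun t => ?_)
      have happ : (v + x n) t = v t + f n t := rfl
      rw [happ]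
      by_cases ht : t ∈ U n
      · have h1 := hnotK t ht
        have h2 := hfrange n t
        have h1' := abs_lt.1 h1
        rw [abs_le]
        exact ⟨by linarith [h1'.1, h2.1], by linarith [h1'.2, h2.2]⟩
      · rw [hsupp n t ht, add_zero]
        calc |v t| ≤ ‖v‖ := abs_apply_le_norm _ _
          _ ≤ M + δ := by linarith
    -- lower bound
    have hlb : M - δ ≤ ‖v + x n‖ := by
      rcases le_or_gt ‖v‖ 1 with hv1 | hv1
      · -- M = 1, use the point p n
        have hpU := hp n
        have hpv := hnotK _ hpU
        have happ : (v + x n) (p n) = v (p n) + 1 := by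
          show v (p n) + f n (p n) = v (p n) + 1
          rw [hf1 n (mem_singleton _)]; rfl
        have h1 : 1 - δ ≤ |(v + x n) (p n)| := by
          rw [happ]
          have h2 := (abs_lt.1 hpv).1
          exact le_trans (by linarith) (le_abs_self _)
        calc M - δ = 1 - δ := by rw [hM, max_eq_right hv1]
          _ ≤ |(v + x n) (p n)| := h1
          _ ≤ ‖v + x n‖ := abs_apply_le_norm _ _
      · -- M = ‖v‖ > 1 ≥ 2δ... use a point where |v| is near ‖v‖
        have hM2 : M = ‖v‖ := by rw [hM]; exact max_eq_left hv1.le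
        obtain ⟨t, ht⟩ := exists_abs_gt (f := v) (C := ‖v‖ - δ) (by linarith [hδhalf, hv1]) (by linarith)
        have htK : δ ≤ |v t| := by linarith [hδhalf, hv1, ht]
        have htU : t ∉ U n := fun hc => absurd (hnotK t hc) (not_lt.2 htK)
        have happ : (v + x n) t = v t := by
          show v t + f n t = v t
          rw [hsupp n t htU, add_zero]
        calc M - δ = ‖v‖ - δ := by rw [hM2]
          _ ≤ |(v + x n) t| := by rw [happ]; exact ht.le
          _ ≤ ‖v + x n‖ := abs_apply_le_norm _ _
    rw [Real.dist_eq, abs_lt]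
    exact ⟨by linarith, by linarith⟩
end

section
/- Let L be a locally compact Hausdorff space with a compact escaping sequence (Uₙ) of nonempty open sets. For each n choose fₙ in the unit sphere of C₀(L) vanishing outside Uₙ. Then for every f ∈ C₀(L), limₙ ‖f + fₙ‖ = max{‖f‖, 1}. -/
open Filter Topology

theorem stmt4 {L : Type*} [TopologicalSpace L] [LocallyCompactSpace L] [T2Space L]
    (U : ℕ → Set L) (hUopen : ∀ n, IsOpen (U n)) (hUne : ∀ n, (U n).Nonempty)
    (hesc : ∀ K : Set L, IsCompact K → ∃ m, ∀ n ≥ m, U n ∩ K = ∅)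
    (f : ℕ → ZeroAtInftyContinuousMap L ℝ) (hf : ∀ n, ‖f n‖ = 1)
    (hsupp : ∀ n, ∀ t ∉ U n, f n t = 0) :
    ∀ g : ZeroAtInftyContinuousMap L ℝ,
      Tendsto (fun n => ‖g + f n‖) atTop (𝓝 (max ‖g‖ 1)) := by
  intro g
  have hpt : ∀ (h : ZeroAtInftyContinuousMap L ℝ) (x : L), ‖h x‖ ≤ ‖h‖ := by
    intro h x
    rw [← ZeroAtInftyContinuousMap.norm_toBCF_eq_norm]
    exact h.toBCF.norm_coe_le_norm x
  have hle : ∀ (h : ZeroAtInftyContinuousMap L ℝ) (C : ℝ), 0 ≤ C →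
      (∀ x, ‖h x‖ ≤ C) → ‖h‖ ≤ C := by
    intro h C hC hx
    rw [← ZeroAtInftyContinuousMap.norm_toBCF_eq_norm]
    exact (BoundedContinuousFunction.norm_le hC).2 hx
  have hgnn : (0:ℝ) ≤ ‖g‖ := norm_nonneg g
  rw [Metric.tendsto_atTop]
  intro ε hε
  set δ : ℝ := min (ε/4) (1/2) with hδdef
  have hδpos : 0 < δ := lt_min (by linarith) (by norm_num)
  have hδε : 3*δ < ε := by
    have : δ ≤ ε/4 := min_le_left _ _
    linarith
  have hδ1 : δ < 1 := lt_of_le_of_lt (min_le_right _ _) (by norm_num)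
  -- find compact K outside of which ‖g‖ < δ
  have hcc : ∀ᶠ x in cocompact L, g x ∈ Metric.ball (0:ℝ) δ :=
    g.zero_at_infty' (Metric.ball_mem_nhds 0 hδpos)
  rw [Filter.eventually_iff, mem_cocompact] at hcc
  obtain ⟨K, hK, hKsub⟩ := hcc
  obtain ⟨m, hm⟩ := hesc K hK
  refine ⟨m, fun n hn => ?_⟩
  have hsmall : ∀ t ∈ U n, ‖g t‖ < δ := by
    intro t ht
    have htK : t ∉ K := by
      intro htK
      have h : t ∈ U n ∩ K := ⟨ht, htK⟩
      rw [hm n hn] at h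
      exact h
    have := hKsub htK
    simpa using this
  -- upper bound
  have hub : ‖g + f n‖ ≤ max ‖g‖ 1 + δ := by
    refine hle _ _ (by positivity) fun x => ?_
    rw [ZeroAtInftyContinuousMap.add_apply]
    by_cases hx : x ∈ U n
    · have h1 : ‖f n x‖ ≤ 1 := by rw [← hf n]; exact hpt (f n) x
      have h2 : ‖g x‖ < δ := hsmall x hx
      calc ‖g x + f n x‖ ≤ ‖g x‖ + ‖f n x‖ := norm_add_le _ _
        _ ≤ δ + 1 := by linarith
        _ ≤ max ‖g‖ 1 + δ := by
            have : (1:ℝ) ≤ max ‖g‖ 1 := le_max_right _ _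
            linarith
    · rw [hsupp n x hx, add_zero]
      have := hpt g x
      have : ‖g x‖ ≤ max ‖g‖ 1 := le_trans this (le_max_left _ _)
      linarith
  -- lower bound 1: ≥ 1 - 2δ
  have hlb1 : 1 - 2*δ ≤ ‖g + f n‖ := by
    -- find t with ‖f n t‖ > 1 - δ
    obtain ⟨t, ht⟩ : ∃ t, 1 - δ < ‖f n t‖ := by
      by_contra hcon
      push_neg at hcon
      have : ‖f n‖ ≤ 1 - δ := hle _ _ (by linarith) hcon
      rw [hf n] at this
      linarith
    have htU : t ∈ U n := by
      by_contra htU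
      rw [hsupp n t htU] at ht
      simp at ht
      linarith
    have hgt : ‖g t‖ < δ := hsmall t htU
    have : 1 - 2*δ ≤ ‖g t + f n t‖ := by
      have := norm_add_le (g t + f n t) (-(g t))
      simp at this
      have h2 : ‖f n t‖ ≤ ‖g t + f n t‖ + ‖g t‖ := by
        calc ‖f n t‖ = ‖(g t + f n t) + (-(g t))‖ := by ring_nf
          _ ≤ ‖g t + f n t‖ + ‖-(g t)‖ := norm_add_le _ _
          _ = ‖g t + f n t‖ + ‖g t‖ := by rw [norm_neg]
      linarith
    calc 1 - 2*δ ≤ ‖g t + f n t‖ := this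
      _ = ‖(g + f n) t‖ := by rw [ZeroAtInftyContinuousMap.add_apply]
      _ ≤ ‖g + f n‖ := hpt _ t
  -- lower bound 2: ≥ ‖g‖ - 3δ
  have hlb2 : ‖g‖ - 3*δ ≤ ‖g + f n‖ := by
    by_cases hg2 : ‖g‖ < 2*δ
    · have := norm_nonneg (g + f n)
      linarith
    · push_neg at hg2
      obtain ⟨t, ht⟩ : ∃ t, ‖g‖ - δ < ‖g t‖ := by
        by_contra hcon
        push_neg at hcon
        have : ‖g‖ ≤ ‖g‖ - δ := hle _ _ (by linarith) hcon
        linarith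
      by_cases htU : t ∈ U n
      · have := hsmall t htU
        linarith
      · have : ‖(g + f n) t‖ = ‖g t‖ := by
          rw [ZeroAtInftyContinuousMap.add_apply, hsupp n t htU, add_zero]
        have h2 := hpt (g + f n) t
        rw [this] at h2
        linarith
  rw [Real.dist_eq, abs_lt]
  constructor
  · rcases max_cases ‖g‖ 1 with ⟨hmax, _⟩ | ⟨hmax, _⟩ <;> rw [hmax] <;> linarith
  · have : max ‖g‖ 1 ≤ max ‖g‖ 1 := le_refl _
    linarith
end

section
/- Let X be a Banach space and {C_α : α ∈ Γ} a family of bounded convex subsets of the bidual X** with the finite intersection property, such that for every ε > 0 and every x ∈ X there exists α ∈ Γ with (1−ε)·max{‖x‖,1} ≤ ‖x + x**‖ ≤ (1+ε)·max{‖x‖,1} for every x** ∈ C_α. Then there exists h in the unit sphere of the fourth dual X'''' such that ‖x + h‖ = max{‖x‖, 1} for every x ∈ X. -/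
namespace NormedSpace

/-- The topological dual of a seminormed space `E` (as in the older Mathlib). -/
abbrev Dual (𝕜 : Type*) [NontriviallyNormedField 𝕜] (E : Type*) [SeminormedAddCommGroup E]
    [NormedSpace 𝕜 E] : Type _ := E →L[𝕜] 𝕜

end NormedSpace

open NormedSpace Metric Set

/-- The canonical embedding of a normed space into its fourth dual. -/
noncomputable def fourthDualEmbed (X : Type*) [NormedAddCommGroup X] [NormedSpace ℝ X] :
    X →L[ℝ] Dual ℝ (Dual ℝ (Dual ℝ (Dual ℝ X))) :=
  (inclusionInDoubleDual ℝ (Dual ℝ (Dual ℝ X))).comp (inclusionInDoubleDual ℝ X)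

private lemma incl_norm {E : Type*} [NormedAddCommGroup E] [NormedSpace ℝ E] (y : E) :
    ‖inclusionInDoubleDual ℝ E y‖ = ‖y‖ :=
  (inclusionInDoubleDualLi ℝ).norm_map y

private lemma fourthDualEmbed_apply {X : Type*} [NormedAddCommGroup X] [NormedSpace ℝ X] (x : X) :
    fourthDualEmbed X x =
      inclusionInDoubleDual ℝ (Dual ℝ (Dual ℝ X)) (inclusionInDoubleDual ℝ X x) := rfl

private lemma tnd_twd {E : Type*} [SeminormedAddCommGroup E] [NormedSpace ℝ E] (v : Dual ℝ E) :
    WeakDual.toStrongDual (StrongDual.toWeakDual v) = v := rfl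

/-- If every element of `S` satisfies a norm bound after translation by `c`, so does every
element of the weak-star closure of `S`. -/
private lemma weakClosure_norm_le {E : Type*} [SeminormedAddCommGroup E] [NormedSpace ℝ E]
    {S : Set (Dual ℝ E)} {c : Dual ℝ E} {r : ℝ}
    (hS : ∀ v ∈ S, ‖c + v‖ ≤ r) {z : WeakDual ℝ E}
    (hz : z ∈ closure (StrongDual.toWeakDual '' S)) :
    ‖c + WeakDual.toStrongDual z‖ ≤ r := by
  have hset : {w : WeakDual ℝ E | ‖c + WeakDual.toStrongDual w‖ ≤ r} =
      (fun w => w + StrongDual.toWeakDual c) ⁻¹' (WeakDual.toStrongDual ⁻¹' closedBall 0 r) := by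
    ext w
    simp only [Set.mem_setOf_eq, Set.mem_preimage, mem_closedBall_zero_iff, map_add, tnd_twd]
    rw [add_comm]
  have hclosed : IsClosed {w : WeakDual ℝ E | ‖c + WeakDual.toStrongDual w‖ ≤ r} := by
    rw [hset]
    exact (WeakDual.isClosed_closedBall _ _).preimage (continuous_add_right _)
  have hsub : closure (StrongDual.toWeakDual '' S) ⊆
      {w : WeakDual ℝ E | ‖c + WeakDual.toStrongDual w‖ ≤ r} := by
    refine closure_minimal ?_ hclosed
    rintro _ ⟨v, hv, rfl⟩
    simpa [tnd_twd] using hS v hv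
  exact hsub hz

/-- If every element of `S` is at least `u` at `f`, so is every element of the
weak-star closure of `S`. -/
private lemma weakClosure_le_eval {E : Type*} [SeminormedAddCommGroup E] [NormedSpace ℝ E]
    {S : Set (Dual ℝ E)} {f : E} {u : ℝ}
    (hS : ∀ v ∈ S, u ≤ v f) {z : WeakDual ℝ E}
    (hz : z ∈ closure (StrongDual.toWeakDual '' S)) :
    u ≤ WeakDual.toStrongDual z f := by
  have hclosed : IsClosed {w : WeakDual ℝ E | u ≤ w f} :=
    isClosed_le continuous_const (WeakDual.eval_continuous f)
  have hsub : closure (StrongDual.toWeakDual '' S) ⊆ {w : WeakDual ℝ E | u ≤ w f} := by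
    refine closure_minimal ?_ hclosed
    rintro _ ⟨v, hv, rfl⟩
    exact hS v hv
  exact hsub hz

set_option maxHeartbeats 0 in
theorem stmt5 {X : Type*} [NormedAddCommGroup X] [NormedSpace ℝ X] [CompleteSpace X]
    {Γ : Type*} (C : Γ → Set (Dual ℝ (Dual ℝ X)))
    (hconv : ∀ α, Convex ℝ (C α))
    (hbdd : ∀ α, Bornology.IsBounded (C α))
    (hFIP : ∀ s : Finset Γ, (⋂ α ∈ s, C α).Nonempty)
    (hest : ∀ ε > (0 : ℝ), ∀ x : X, ∃ α : Γ, ∀ y ∈ C α,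
      (1 - ε) * max ‖x‖ 1 ≤ ‖inclusionInDoubleDual ℝ X x + y‖ ∧
      ‖inclusionInDoubleDual ℝ X x + y‖ ≤ (1 + ε) * max ‖x‖ 1) :
    ∃ h : Dual ℝ (Dual ℝ (Dual ℝ (Dual ℝ X))), ‖h‖ = 1 ∧
      ∀ x : X, ‖fourthDualEmbed X x + h‖ = max ‖x‖ 1 := by
  classical
  obtain ⟨α₀, -⟩ := hest 1 one_pos 0
  set J : X →L[ℝ] Dual ℝ (Dual ℝ X) := inclusionInDoubleDual ℝ X with hJdef
  set ι : Dual ℝ (Dual ℝ X) →L[ℝ] Dual ℝ (Dual ℝ (Dual ℝ (Dual ℝ X))) :=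
    inclusionInDoubleDual ℝ (Dual ℝ (Dual ℝ X)) with hιdef
  have hιnorm : ∀ y : Dual ℝ (Dual ℝ X), ‖ι y‖ = ‖y‖ := fun y => incl_norm y
  have hιeval : ∀ (y : Dual ℝ (Dual ℝ X)) (f : Dual ℝ (Dual ℝ (Dual ℝ X))),
      (ι y) f = f y := fun y f => dual_def ℝ (Dual ℝ (Dual ℝ X)) y f
  obtain ⟨R, hR⟩ := (hbdd α₀).subset_closedBall 0
  -- weak-star closures of the images of the `C α` in the fourth dual
  set K : Γ → Set (WeakDual ℝ (Dual ℝ (Dual ℝ (Dual ℝ X)))) :=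
    fun α => closure (StrongDual.toWeakDual '' (ι '' C α)) with hKdef
  have hint : ((WeakDual.toStrongDual ⁻¹' closedBall 0 R) ∩ ⋂ α, K α).Nonempty := by
    refine (WeakDual.isCompact_closedBall
      (0 : Dual ℝ (Dual ℝ (Dual ℝ (Dual ℝ X)))) R).inter_iInter_nonempty
      K (fun α => isClosed_closure) ?_
    intro u
    obtain ⟨y, hy⟩ := hFIP (insert α₀ u)
    simp only [Set.mem_iInter, Finset.mem_insert] at hy
    refine ⟨StrongDual.toWeakDual (ι y), ?_, ?_⟩
    · show WeakDual.toStrongDual (StrongDual.toWeakDual (ι y)) ∈ closedBall 0 R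
      have htw : WeakDual.toStrongDual (StrongDual.toWeakDual (ι y)) = ι y := tnd_twd _
      rw [htw, mem_closedBall_zero_iff, hιnorm]
      simpa using mem_closedBall_zero_iff.mp (hR (hy α₀ (Or.inl rfl)))
    · exact Set.mem_iInter₂.mpr fun α hα => subset_closure ⟨ι y, ⟨y, hy α (Or.inr hα), rfl⟩, rfl⟩
  obtain ⟨h', -, h'K⟩ := hint
  rw [Set.mem_iInter] at h'K
  set h : Dual ℝ (Dual ℝ (Dual ℝ (Dual ℝ X))) := WeakDual.toStrongDual h' with hhdef
  have main : ∀ x : X, ‖ι (J x) + h‖ = max ‖x‖ 1 := by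
    intro x
    set M := max ‖x‖ 1 with hM
    have hM1 : (1 : ℝ) ≤ M := le_max_right _ _
    have hM0 : (0 : ℝ) < M := lt_of_lt_of_le one_pos hM1
    -- upper estimate
    have upper : ∀ ε > (0 : ℝ), ‖ι (J x) + h‖ ≤ (1 + ε) * M := by
      intro ε hε
      obtain ⟨α, hα⟩ := hest ε hε x
      refine weakClosure_norm_le (S := ι '' C α) ?_ (h'K α)
      rintro _ ⟨y, hy, rfl⟩
      rw [← map_add, hιnorm]
      exact (hα y hy).2
    -- lower estimate
    have lower : ∀ ε : ℝ, 0 < ε → ε < 1 → (1 - ε) * ((1 - ε) * M) ≤ ‖ι (J x) + h‖ := by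
      intro ε hε0 hε1
      set r : ℝ := (1 - ε) * M with hrdef
      have hr0 : 0 < r := mul_pos (by linarith) hM0
      obtain ⟨α, hα⟩ := hest ε hε0 x
      have hdisj : Disjoint (ball (0 : Dual ℝ (Dual ℝ X)) r) ((fun y => J x + y) '' C α) := by
        rw [Set.disjoint_left]
        rintro a ha ⟨y, hy, rfl⟩
        rw [mem_ball_zero_iff] at ha
        exact absurd (hα y hy).1 (by rw [← hrdef]; linarith)
      obtain ⟨f, u, hfu, hfl⟩ := geometric_hahn_banach_open (convex_ball _ _) isOpen_ball
        ((hconv α).translate (J x)) hdisj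
      have hu0 : 0 < u := by simpa using hfu 0 (mem_ball_self hr0)
      set s : ℝ := (1 - ε) * r with hsdef
      have hs0 : 0 < s := mul_pos (by linarith) hr0
      have hsr : s < r := by rw [hsdef]; linarith [mul_pos hε0 hr0]
      -- norm bound on f
      have hf : ‖f‖ ≤ u / s := by
        refine f.opNorm_le_bound (div_nonneg hu0.le hs0.le) fun a => ?_
        rcases eq_or_ne a 0 with rfl | ha
        · simp
        have ha' : 0 < ‖a‖ :=
          lt_of_le_of_ne (norm_nonneg a) fun hc => ha ((ContinuousLinearMap.opNorm_zero_iff a).mp hc.symm)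
        have hnorm : ‖(s / ‖a‖) • a‖ = s := by
          rw [norm_smul, Real.norm_eq_abs, abs_of_pos (div_pos hs0 ha'),
            div_mul_cancel₀ _ ha'.ne']
        have h1 : f ((s / ‖a‖) • a) < u := hfu _ (by rw [mem_ball_zero_iff, hnorm]; exact hsr)
        have h2 : f (-((s / ‖a‖) • a)) < u := hfu _ (by
          rw [mem_ball_zero_iff, norm_neg, hnorm]; exact hsr)
        rw [map_smul, smul_eq_mul] at h1
        rw [map_neg, map_smul, smul_eq_mul] at h2
        have habs : |s / ‖a‖ * f a| ≤ u := abs_le.mpr ⟨by linarith, h1.le⟩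
        rw [abs_mul, abs_of_pos (div_pos hs0 ha')] at habs
        rw [Real.norm_eq_abs]
        calc |f a| = (s / ‖a‖ * |f a|) * (‖a‖ / s) := by field_simp
          _ ≤ u * (‖a‖ / s) := mul_le_mul_of_nonneg_right habs (by positivity)
          _ = u / s * ‖a‖ := by ring
      -- f is nonzero
      obtain ⟨y₀, hy₀⟩ := hFIP {α}
      simp only [Finset.mem_singleton, Set.mem_iInter] at hy₀
      have hfy₀ : u ≤ f (J x + y₀) := hfl _ ⟨y₀, hy₀ α rfl, rfl⟩
      have hf0 : 0 < ‖f‖ := by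
        by_contra hcon
        push_neg at hcon
        have h1 : u ≤ ‖f‖ * ‖J x + y₀‖ :=
          hfy₀.trans ((le_abs_self _).trans (f.le_opNorm _))
        nlinarith [norm_nonneg (J x + y₀), hu0]
      -- pass to the weak-star limit
      have hh : u - f (J x) ≤ h f := by
        refine weakClosure_le_eval (S := ι '' C α) ?_ (h'K α)
        rintro _ ⟨y, hy, rfl⟩
        rw [hιeval]
        have := hfl _ ⟨y, hy, rfl⟩
        rw [map_add] at this
        linarith
      have hle : u ≤ ‖ι (J x) + h‖ * ‖f‖ := by
        have heval : (ι (J x) + h) f = f (J x) + h f := by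
          rw [ContinuousLinearMap.add_apply, hιeval]
        calc u ≤ (ι (J x) + h) f := by rw [heval]; linarith
          _ ≤ ‖(ι (J x) + h) f‖ := le_abs_self _
          _ ≤ ‖ι (J x) + h‖ * ‖f‖ := (ι (J x) + h).le_opNorm f
      have hle2 : u ≤ ‖ι (J x) + h‖ * (u / s) :=
        le_trans hle (mul_le_mul_of_nonneg_left hf (norm_nonneg _))
      have hss : u * s ≤ ‖ι (J x) + h‖ * u := by
        have := mul_le_mul_of_nonneg_right hle2 hs0.le
        rwa [mul_assoc, div_mul_cancel₀ _ hs0.ne'] at this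
      have hfin : s ≤ ‖ι (J x) + h‖ :=
        (mul_le_mul_iff_of_pos_right hu0).mp (by linarith)
      calc (1 - ε) * ((1 - ε) * M) = s := by rw [hsdef, hrdef]
        _ ≤ ‖ι (J x) + h‖ := hfin
    -- combine
    refine le_antisymm ?_ ?_
    · refine le_of_forall_pos_le_add fun δ hδ => ?_
      calc ‖ι (J x) + h‖ ≤ (1 + δ / M) * M := upper (δ / M) (div_pos hδ hM0)
        _ = M + δ := by field_simp
    · refine le_of_forall_pos_le_add fun δ hδ => ?_
      set ε : ℝ := min (1 / 2) (δ / (2 * M)) with hεdef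
      have hε0 : 0 < ε := lt_min (by norm_num) (div_pos hδ (by positivity))
      have hε1 : ε < 1 := lt_of_le_of_lt (min_le_left _ _) (by norm_num)
      have hεle : ε * (2 * M) ≤ δ := by
        calc ε * (2 * M) ≤ δ / (2 * M) * (2 * M) :=
          mul_le_mul_of_nonneg_right (min_le_right _ _) (by positivity)
          _ = δ := div_mul_cancel₀ _ (by positivity)
      have hl := lower ε hε0 hε1
      have hkey : M - ε * (2 * M) + ε * ε * M = (1 - ε) * ((1 - ε) * M) := by ring
      have hsq : 0 ≤ ε * ε * M := by positivity
      linarith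
  refine ⟨h, ?_, fun x => ?_⟩
  · simpa using main 0
  · have hx := main x
    have : fourthDualEmbed X x + h = ι (J x) + h := rfl
    rw [this]
    exact hx
end

section
/- Let X be a sequentially ASQ Banach space witnessed by (xₙ), let (εₙ) be a sequence of positive numbers tending to 0, and let (Fₙ) be an increasing sequence of finite-dimensional subspaces of X. Then there exists a subsequence (yₙ) of (xₙ) such that |‖x + y‖ − max{‖x‖, 1}| < εₙ·max{‖x‖, 1} for every n ∈ ℕ, every x ∈ span(Fₙ ∪ {y₁,…,y_{n−1}}), and every y of the form Σ_{i=n+1}^{k} λᵢ yᵢ with k > n and max{|λᵢ| : n+1 ≤ i ≤ k} = 1. -/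
open Filter Topology


private lemma key_step {X : Type*} [NormedAddCommGroup X] [NormedSpace ℝ X]
    (x : ℕ → X) (hx : ∀ n, ‖x n‖ = 1)
    (hasq : ∀ v : X, Tendsto (fun n => ‖v + x n‖) atTop (𝓝 (max ‖v‖ 1)))
    (G : Submodule ℝ X) (hG : FiniteDimensional ℝ G) (δ : ℝ) (hδ : 0 < δ) (N₀ : ℕ) :
    ∃ N, N₀ ≤ N ∧ ∀ u ∈ G, ∀ t : ℝ,
      abs (‖u + t • x N‖ - max ‖u‖ |t|) ≤ δ * max ‖u‖ |t| := by
  haveI := hG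
  set E := G × ℝ with hE
  set K : Set E := Metric.closedBall 0 1 with hKdef
  have hK : IsCompact K := isCompact_closedBall 0 1
  set g : E → ℝ := fun p => max ‖(p.1 : X)‖ |p.2| with hg
  set f : ℕ → E → ℝ := fun m p => ‖(p.1 : X) + p.2 • x m‖ with hf
  -- pointwise convergence
  have hpt : ∀ p : E, Tendsto (fun m => f m p) atTop (𝓝 (g p)) := by
    intro p
    rcases eq_or_ne p.2 0 with h0 | h0
    · simp only [hf, hg, h0, zero_smul, add_zero, abs_zero]
      have : max ‖(p.1 : X)‖ 0 = ‖(p.1 : X)‖ := max_eq_left (norm_nonneg _)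
      rw [this]
      exact tendsto_const_nhds
    · have hfac : ∀ m, f m p = |p.2| * ‖(p.2⁻¹ • (p.1 : X)) + x m‖ := by
        intro m
        have h1 : (p.1 : X) + p.2 • x m = p.2 • ((p.2⁻¹ • (p.1 : X)) + x m) := by
          rw [smul_add, smul_inv_smul₀ h0]
        simp only [hf, h1, norm_smul, Real.norm_eq_abs]
      have hlim : |p.2| * max ‖(p.2⁻¹ • (p.1 : X))‖ 1 = g p := by
        rw [norm_smul, norm_inv, Real.norm_eq_abs]
        rw [mul_max_of_nonneg _ _ (abs_nonneg p.2)]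
        rw [mul_one, ← mul_assoc, mul_inv_cancel₀ (abs_ne_zero.mpr h0), one_mul]
      rw [← hlim]
      simp only [hfac]
      exact ((hasq _).const_mul _)
  -- equi-Lipschitz bounds
  have hflip : ∀ m (p q : E), |f m p - f m q| ≤ 2 * dist p q := by
    intro m p q
    have h1 : |f m p - f m q| ≤ ‖((p.1 : X) + p.2 • x m) - ((q.1 : X) + q.2 • x m)‖ :=
      abs_norm_sub_norm_le _ _
    have h2 : ((p.1 : X) + p.2 • x m) - ((q.1 : X) + q.2 • x m)
        = ((p.1 : X) - (q.1 : X)) + (p.2 - q.2) • x m := by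
      rw [sub_smul]; abel
    have h3 : ‖((p.1 : X) - (q.1 : X)) + (p.2 - q.2) • x m‖
        ≤ ‖(p.1 : X) - (q.1 : X)‖ + |p.2 - q.2| := by
      calc _ ≤ ‖(p.1 : X) - (q.1 : X)‖ + ‖(p.2 - q.2) • x m‖ := norm_add_le _ _
      _ = ‖(p.1 : X) - (q.1 : X)‖ + |p.2 - q.2| := by
          rw [norm_smul, Real.norm_eq_abs, hx, mul_one]
    have h4 : ‖(p.1 : X) - (q.1 : X)‖ = dist p.1 q.1 := by
      rw [dist_eq_norm]; norm_cast
    have h5 : |p.2 - q.2| = dist p.2 q.2 := (Real.dist_eq _ _).symm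
    have h6 : dist p.1 q.1 ≤ dist p q := le_max_left _ _
    have h7 : dist p.2 q.2 ≤ dist p q := le_max_right _ _
    linarith [h1.trans (h2 ▸ h3)]
  have hglip : ∀ p q : E, |g p - g q| ≤ 2 * dist p q := by
    intro p q
    have h1 : |g p - g q| ≤ max |‖(p.1 : X)‖ - ‖(q.1 : X)‖| (abs (|p.2| - |q.2|)) :=
      abs_max_sub_max_le_max _ _ _ _
    have h2 : |‖(p.1 : X)‖ - ‖(q.1 : X)‖| ≤ ‖(p.1 : X) - (q.1 : X)‖ := abs_norm_sub_norm_le _ _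
    have h3 : abs (|p.2| - |q.2|) ≤ |p.2 - q.2| := abs_abs_sub_abs_le_abs_sub _ _
    have h4 : ‖(p.1 : X) - (q.1 : X)‖ = dist p.1 q.1 := by rw [dist_eq_norm]; norm_cast
    have h5 : |p.2 - q.2| = dist p.2 q.2 := (Real.dist_eq _ _).symm
    have h6 : dist p.1 q.1 ≤ dist p q := le_max_left _ _
    have h7 : dist p.2 q.2 ≤ dist p q := le_max_right _ _
    have := max_le (h2.trans (h4 ▸ h6)) (h3.trans (h5 ▸ h7))
    have hd : (0:ℝ) ≤ dist p q := dist_nonneg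
    calc |g p - g q| ≤ max |‖(p.1 : X)‖ - ‖(q.1 : X)‖| (abs (|p.2| - |q.2|)) := h1
      _ ≤ dist p q := this
      _ ≤ 2 * dist p q := by linarith
  -- uniform convergence on K via a finite net
  have hev : ∀ᶠ m in atTop, ∀ p ∈ K, |f m p - g p| ≤ δ := by
    obtain ⟨t, htK, hcov⟩ := hK.elim_nhds_subcover (fun q => Metric.ball q (δ/6))
      (fun q _ => Metric.ball_mem_nhds q (by positivity))
    have hnet : ∀ᶠ m in atTop, ∀ q ∈ t, |f m q - g q| < δ/3 := by
      rw [Filter.eventually_all_finset]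
      intro q hq
      have h3 : (0:ℝ) < δ/3 := by positivity
      have := Metric.tendsto_nhds.mp (hpt q) (δ/3) h3
      filter_upwards [this] with m hm
      rwa [Real.dist_eq] at hm
    filter_upwards [hnet] with m hm p hp
    obtain ⟨q, hqt, hpq⟩ := Set.mem_iUnion₂.mp (hcov hp)
    have hd : dist p q < δ/6 := Metric.mem_ball.mp hpq
    have h1 := hflip m p q
    have h2 := hglip q p
    have h3 := hm q hqt
    have habs : |f m p - g p| ≤ |f m p - f m q| + |f m q - g q| + |g q - g p| := by
      have := abs_sub_le (f m p) (f m q) (g p)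
      have := abs_sub_le (f m q) (g q) (g p)
      linarith
    have hd2 : dist q p = dist p q := dist_comm q p
    linarith
  obtain ⟨N, hN1, hN2⟩ := ((eventually_ge_atTop N₀).and hev).exists
  refine ⟨N, hN1, ?_⟩
  intro u hu t
  rcases le_or_gt (max ‖u‖ |t|) 0 with hr | hr
  · have h1 : ‖u‖ = 0 := le_antisymm ((le_max_left _ _).trans hr) (norm_nonneg u)
    have h2 : |t| = 0 := le_antisymm ((le_max_right _ _).trans hr) (abs_nonneg t)
    have hu0 : u = 0 := norm_eq_zero.mp h1
    have ht0 : t = 0 := abs_eq_zero.mp h2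
    simp [hu0, ht0]
  · set r := max ‖u‖ |t| with hrdef
    set p : E := (⟨r⁻¹ • u, G.smul_mem _ hu⟩, r⁻¹ * t) with hp
    have hrinv : (0:ℝ) ≤ r⁻¹ := inv_nonneg.mpr hr.le
    have hn1 : ‖(p.1 : X)‖ = r⁻¹ * ‖u‖ := by
      simp only [hp, norm_smul, Real.norm_eq_abs, abs_of_nonneg hrinv]
    have hn2 : |p.2| = r⁻¹ * |t| := by
      simp only [hp, abs_mul, abs_of_nonneg hrinv]
    have hgp : g p = 1 := by
      simp only [hg, hn1, hn2, ← mul_max_of_nonneg _ _ hrinv, ← hrdef,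
        inv_mul_cancel₀ hr.ne']
    have hmem : p ∈ K := by
      rw [hKdef, Metric.mem_closedBall, dist_zero_right, Prod.norm_def]
      apply max_le
      · show ‖p.1‖ ≤ 1
        have : ‖p.1‖ = ‖(p.1 : X)‖ := rfl
        rw [this, hn1]
        calc r⁻¹ * ‖u‖ ≤ r⁻¹ * r := by
              apply mul_le_mul_of_nonneg_left (le_max_left _ _) hrinv
          _ = 1 := inv_mul_cancel₀ hr.ne'
      · show ‖p.2‖ ≤ 1
        rw [Real.norm_eq_abs, hn2]
        calc r⁻¹ * |t| ≤ r⁻¹ * r := by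
              apply mul_le_mul_of_nonneg_left (le_max_right _ _) hrinv
          _ = 1 := inv_mul_cancel₀ hr.ne'
    have hkey := hN2 p hmem
    have hfp : f N p = r⁻¹ * ‖u + t • x N‖ := by
      have h1 : (p.1 : X) + p.2 • x N = r⁻¹ • (u + t • x N) := by
        simp only [hp, smul_add, smul_smul]
      simp only [hf, h1, norm_smul, Real.norm_eq_abs, abs_of_nonneg hrinv]
    rw [hfp, hgp] at hkey
    have hfactor : ‖u + t • x N‖ - r = r * (r⁻¹ * ‖u + t • x N‖ - 1) := by
      field_simp
    rw [hfactor, abs_mul, abs_of_pos hr]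
    calc r * |r⁻¹ * ‖u + t • x N‖ - 1| ≤ r * δ := mul_le_mul_of_nonneg_left hkey hr.le
      _ = δ * r := mul_comm _ _

private lemma geo_sum_bound (n : ℕ) : ∀ k, n ≤ k →
    ∑ i ∈ Finset.Icc (n+1) k, ((2:ℝ)⁻¹)^(i+2) ≤ ((2:ℝ)⁻¹)^(n+2) - ((2:ℝ)⁻¹)^(k+2) := by
  intro k hk
  induction k, hk using Nat.le_induction with
  | base => simp [Finset.Icc_eq_empty_of_lt (Nat.lt_succ_self n)]
  | succ k hk ih =>
    rw [← Finset.insert_Icc_right_eq_Icc_add_one (by omega), Finset.sum_insert (by simp)]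
    have h : ((2:ℝ)⁻¹)^(k+1+2) + ((2:ℝ)⁻¹)^(k+1+2) = ((2:ℝ)⁻¹)^(k+2) := by ring
    linarith

private noncomputable def seqRec (T : (ℕ → ℕ) → ℕ → ℕ) : ℕ → ℕ
  | m => T (fun i => if _ : i < m then seqRec T i else 0) m
  termination_by m => m
  decreasing_by omega

private lemma seqRec_eq (T : (ℕ → ℕ) → ℕ → ℕ) (m : ℕ) :
    seqRec T m = T (fun i => if _ : i < m then seqRec T i else 0) m := by
  rw [seqRec]


theorem stmt9 {X : Type*} [NormedAddCommGroup X] [NormedSpace ℝ X] [CompleteSpace X]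
    (x : ℕ → X) (hx : ∀ n, ‖x n‖ = 1)
    (hasq : ∀ v : X, Tendsto (fun n => ‖v + x n‖) atTop (𝓝 (max ‖v‖ 1)))
    (ε : ℕ → ℝ) (hε : ∀ n, 0 < ε n) (hε0 : Tendsto ε atTop (𝓝 0))
    (F : ℕ → Submodule ℝ X) (hFfd : ∀ n, FiniteDimensional ℝ (F n))
    (hFmono : ∀ n, F n ≤ F (n + 1)) :
    ∃ φ : ℕ → ℕ, StrictMono φ ∧
      ∀ n : ℕ, 1 ≤ n →
        ∀ v ∈ Submodule.span ℝ ((F n : Set X) ∪ (fun i : ℕ => x (φ i)) '' {i | 1 ≤ i ∧ i ≤ n - 1}),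
          ∀ k : ℕ, n < k → ∀ c : ℕ → ℝ,
            (∀ i ∈ Finset.Icc (n + 1) k, |c i| ≤ 1) →
            (∃ i ∈ Finset.Icc (n + 1) k, |c i| = 1) →
            abs (‖v + ∑ i ∈ Finset.Icc (n + 1) k, c i • x (φ i)‖ - max ‖v‖ 1)
              < ε n * max ‖v‖ 1 := by

  classical
  -- the tolerance sequence
  set lo : ℕ → ℝ := fun i => (Finset.range (i+1)).inf' (by simp) (fun j => min (ε j) 1) with hlo
  have hlopos : ∀ i, 0 < lo i := by
    intro i
    exact (Finset.lt_inf'_iff _).mpr fun j _ => lt_min (hε j) one_pos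
  have hlole : ∀ j i, j ≤ i → lo i ≤ min (ε j) 1 := by
    intro j i h
    exact Finset.inf'_le _ (Finset.mem_range.mpr (by omega))
  set d : ℕ → ℝ := fun i => lo i * (2:ℝ)⁻¹ ^ (i+2) with hdd
  have hdpos : ∀ i, 0 < d i := fun i => mul_pos (hlopos i) (by positivity)
  have hdsum : ∀ n k, n ≤ k → 2 * ∑ i ∈ Finset.Icc (n+1) k, d i ≤ min (ε n) 1 / 2 := by
    intro n k hk
    have h1 : ∑ i ∈ Finset.Icc (n+1) k, d i
        ≤ ∑ i ∈ Finset.Icc (n+1) k, min (ε n) 1 * ((2:ℝ)⁻¹)^(i+2) := by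
      apply Finset.sum_le_sum
      intro i hi
      have hni : n ≤ i := by have := (Finset.mem_Icc.mp hi).1; omega
      exact mul_le_mul_of_nonneg_right (hlole n i hni) (by positivity)
    rw [← Finset.mul_sum] at h1
    have h2 := geo_sum_bound n k hk
    have h3 : (0:ℝ) < min (ε n) 1 := lt_min (hε n) one_pos
    have h4 : ((2:ℝ)⁻¹)^(n+2) ≤ ((2:ℝ)⁻¹)^2 :=
      pow_le_pow_of_le_one (by norm_num) (by norm_num) (by omega)
    have h5 : (0:ℝ) ≤ ((2:ℝ)⁻¹)^(k+2) := by positivity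
    have h6 : ∑ i ∈ Finset.Icc (n+1) k, ((2:ℝ)⁻¹)^(i+2) ≤ 1/4 := by
      have : ((2:ℝ)⁻¹)^2 = 1/4 := by norm_num
      linarith
    nlinarith [mul_le_mul_of_nonneg_left h6 h3.le]
  -- monotone family
  have hFle : ∀ a b : ℕ, a ≤ b → F a ≤ F b := fun a b h => monotone_nat_of_le_succ hFmono h
  -- subspaces used in the recursion
  set Gm : (ℕ → ℕ) → ℕ → Submodule ℝ X := fun prev m =>
    F m ⊔ Submodule.span ℝ ((fun i => x (prev i)) '' Set.Iio m) with hGm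
  have hGmfd : ∀ prev m, FiniteDimensional ℝ (Gm prev m) := by
    intro prev m
    haveI := hFfd m
    haveI : FiniteDimensional ℝ (Submodule.span ℝ ((fun i => x (prev i)) '' Set.Iio m)) :=
      FiniteDimensional.span_of_finite ℝ ((Set.finite_Iio m).image _)
    exact (inferInstance :
      FiniteDimensional ℝ ↥(F m ⊔ Submodule.span ℝ ((fun i => x (prev i)) '' Set.Iio m)))
  set T : (ℕ → ℕ) → ℕ → ℕ := fun prev m =>
    (key_step x hx hasq (Gm prev m) (hGmfd prev m) (d m) (hdpos m)
      ((Finset.range m).sup prev + 1)).choose with hT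
  set φ : ℕ → ℕ := seqRec T with hφ
  have hφeq : ∀ m, φ m = T (fun i => if _ : i < m then φ i else 0) m := by
    intro m
    rw [hφ]
    exact seqRec_eq T m
  have hφspec : ∀ m,
      ((Finset.range m).sup (fun i => if _ : i < m then φ i else 0) + 1 ≤ φ m) ∧
      ∀ u ∈ Gm (fun i => if _ : i < m then φ i else 0) m, ∀ t : ℝ,
        abs (‖u + t • x (φ m)‖ - max ‖u‖ |t|) ≤ d m * max ‖u‖ |t| := by
    intro m
    have h := (key_step x hx hasq (Gm (fun i => if _ : i < m then φ i else 0) m)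
      (hGmfd _ m) (d m) (hdpos m)
      ((Finset.range m).sup (fun i => if _ : i < m then φ i else 0) + 1)).choose_spec
    rw [hφeq m, hT]
    exact h
  -- strict monotonicity
  have hlt : ∀ m i, i < m → φ i < φ m := by
    intro m i him
    have h1 := (hφspec m).1
    have h2 : φ i ≤ (Finset.range m).sup (fun i => if _ : i < m then φ i else 0) := by
      have he : (fun j => if _ : j < m then φ j else 0) i = φ i := dif_pos him
      rw [← he]
      exact Finset.le_sup (f := fun j => if _ : j < m then φ j else 0)
        (Finset.mem_range.mpr him)
    omega
  have hmono : StrictMono φ := strictMono_nat_of_lt_succ fun m => hlt (m+1) m (by omega)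
  -- goodness in terms of φ
  have hgood : ∀ m, ∀ u ∈ (F m ⊔ Submodule.span ℝ ((fun i => x (φ i)) '' Set.Iio m)),
      ∀ t : ℝ, abs (‖u + t • x (φ m)‖ - max ‖u‖ |t|) ≤ d m * max ‖u‖ |t| := by
    intro m u hu t
    apply (hφspec m).2
    show u ∈ F m ⊔ Submodule.span ℝ ((fun i => x (if _ : i < m then φ i else 0)) '' Set.Iio m)
    have himg : (fun i => x (if _ : i < m then φ i else 0)) '' Set.Iio m
        = (fun i => x (φ i)) '' Set.Iio m := by
      apply Set.image_congr
      intro i hi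
      simp [Set.mem_Iio.mp hi]
    rw [himg]
    exact hu
  refine ⟨φ, hmono, ?_⟩
  intro n hn v hv k hkn c hc1 hcw
  have hvG : ∀ j, n ≤ j → v ∈ F j ⊔ Submodule.span ℝ ((fun i => x (φ i)) '' Set.Iio j) := by
    intro j hj
    apply Submodule.span_le.mpr ?_ hv
    rintro z (hz | ⟨i, hi, rfl⟩)
    · exact Submodule.mem_sup_left (hFle n j hj hz)
    · obtain ⟨hi1, hi2⟩ := hi
      apply Submodule.mem_sup_right
      exact Submodule.subset_span ⟨i, Set.mem_Iio.mpr (by omega), rfl⟩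
  set M : ℕ → ℝ := fun j => (Finset.Icc (n+1) j).fold max ‖v‖ (fun i => |c i|) with hM
  have hMn : M n = ‖v‖ := by
    rw [hM]
    show (Finset.Icc (n+1) n).fold max ‖v‖ (fun i => |c i|) = ‖v‖
    rw [Finset.Icc_eq_empty (by omega), Finset.fold_empty]
  have hMsucc : ∀ j, n ≤ j → M (j+1) = max |c (j+1)| (M j) := by
    intro j hj
    show (Finset.Icc (n+1) (j+1)).fold max ‖v‖ (fun i => |c i|) = _
    rw [← Finset.insert_Icc_right_eq_Icc_add_one (by omega : n+1 ≤ j+1),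
      Finset.fold_insert (by rw [Finset.mem_Icc]; omega)]
  have main : ∀ j, n ≤ j → j ≤ k →
      ‖v‖ ≤ M j ∧ M j ≤ max ‖v‖ 1 ∧
      abs (‖v + ∑ i ∈ Finset.Icc (n+1) j, c i • x (φ i)‖ - M j)
        ≤ M j * (2 * ∑ i ∈ Finset.Icc (n+1) j, d i) := by
    intro j hj
    induction j, hj using Nat.le_induction with
    | base =>
      intro _
      have e : Finset.Icc (n+1) n = ∅ := Finset.Icc_eq_empty (by omega)
      refine ⟨by rw [hMn], by rw [hMn]; exact le_max_left _ _, ?_⟩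
      rw [hMn, e]
      simp
    | succ j hj ih =>
      intro hj1k
      have hjk : j ≤ k := by omega
      obtain ⟨ihv, ihub, ihP⟩ := ih hjk
      set w := v + ∑ i ∈ Finset.Icc (n+1) j, c i • x (φ i) with hw
      have hwmem : w ∈ F (j+1) ⊔ Submodule.span ℝ ((fun i => x (φ i)) '' Set.Iio (j+1)) := by
        apply Submodule.add_mem
        · exact hvG (j+1) (by omega)
        · apply Submodule.sum_mem
          intro i hi
          apply Submodule.smul_mem
          apply Submodule.mem_sup_right
          apply Submodule.subset_span
          exact ⟨i, Set.mem_Iio.mpr (by have := (Finset.mem_Icc.mp hi).2; omega), rfl⟩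
      have hkey := hgood (j+1) w hwmem (c (j+1))
      have hsum : v + ∑ i ∈ Finset.Icc (n+1) (j+1), c i • x (φ i)
          = w + c (j+1) • x (φ (j+1)) := by
        rw [hw, ← Finset.insert_Icc_right_eq_Icc_add_one (by omega : n+1 ≤ j+1),
          Finset.sum_insert (by rw [Finset.mem_Icc]; omega)]
        abel
      have hdnew : ∑ i ∈ Finset.Icc (n+1) (j+1), d i
          = d (j+1) + ∑ i ∈ Finset.Icc (n+1) j, d i := by
        rw [← Finset.insert_Icc_right_eq_Icc_add_one (by omega : n+1 ≤ j+1),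
          Finset.sum_insert (by rw [Finset.mem_Icc]; omega)]
      have hM' := hMsucc j hj
      have hb1 : |c (j+1)| ≤ 1 := hc1 (j+1) (Finset.mem_Icc.mpr ⟨by omega, by omega⟩)
      have hS0 : (0:ℝ) ≤ ∑ i ∈ Finset.Icc (n+1) j, d i :=
        Finset.sum_nonneg fun i _ => (hdpos i).le
      have hS1 : 2 * ∑ i ∈ Finset.Icc (n+1) j, d i ≤ 1 := by
        have h1 := hdsum n j hj
        have h2 : min (ε n) 1 ≤ 1 := min_le_right _ _
        linarith
      have hv0 : (0:ℝ) ≤ ‖v‖ := norm_nonneg v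
      have hMj0 : (0:ℝ) ≤ M j := le_trans hv0 ihv
      have hMle : M j ≤ M (j+1) := by rw [hM']; exact le_max_right _ _
      have hM'0 : (0:ℝ) ≤ M (j+1) := hMj0.trans hMle
      have hmm : abs (max ‖w‖ |c (j+1)| - M (j+1)) ≤ abs (‖w‖ - M j) := by
        rw [hM', max_comm |c (j+1)| (M j)]
        calc abs (max ‖w‖ |c (j+1)| - max (M j) |c (j+1)|)
            ≤ max (abs (‖w‖ - M j)) (abs (|c (j+1)| - |c (j+1)|)) :=
              abs_max_sub_max_le_max _ _ _ _
          _ = abs (‖w‖ - M j) := by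
              simp [max_eq_left (abs_nonneg (‖w‖ - M j))]
      have hmax2 : max ‖w‖ |c (j+1)| ≤ 2 * M (j+1) := by
        apply max_le
        · have h1 := (abs_le.mp ihP).2
          have h2 : M j * (2 * ∑ i ∈ Finset.Icc (n+1) j, d i) ≤ M j := by
            nlinarith
          linarith
        · have : |c (j+1)| ≤ M (j+1) := by rw [hM']; exact le_max_left _ _
          linarith
      refine ⟨ihv.trans hMle, ?_, ?_⟩
      · rw [hM']
        exact max_le (hb1.trans (le_max_right _ _)) ihub
      · rw [hsum, hdnew]
        have habs := abs_sub_le (‖w + c (j+1) • x (φ (j+1))‖) (max ‖w‖ |c (j+1)|) (M (j+1))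
        have hint1 : d (j+1) * max ‖w‖ |c (j+1)| ≤ d (j+1) * (2 * M (j+1)) :=
          mul_le_mul_of_nonneg_left hmax2 (hdpos (j+1)).le
        have hint2 : M j * (2 * ∑ i ∈ Finset.Icc (n+1) j, d i)
            ≤ M (j+1) * (2 * ∑ i ∈ Finset.Icc (n+1) j, d i) :=
          mul_le_mul_of_nonneg_right hMle (by linarith)
        nlinarith [habs, hkey, hmm, ihP, hint1, hint2]
  obtain ⟨hvk, hub, hP⟩ := main k (by omega) le_rfl
  have hMk : M k = max ‖v‖ 1 := by
    obtain ⟨i0, hi0, hci0⟩ := hcw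
    have h1 : |c i0| ≤ M k := by
      show |c i0| ≤ (Finset.Icc (n+1) k).fold max ‖v‖ (fun i => |c i|)
      exact (Finset.le_fold_max _).mpr (Or.inr ⟨i0, hi0, le_refl _⟩)
    rw [hci0] at h1
    exact le_antisymm hub (max_le hvk h1)
  rw [hMk] at hP
  have hfin : 2 * ∑ i ∈ Finset.Icc (n+1) k, d i < ε n := by
    have h1 := hdsum n k (by omega)
    have h2 : min (ε n) 1 ≤ ε n := min_le_left _ _
    have h3 := hε n
    linarith
  calc abs (‖v + ∑ i ∈ Finset.Icc (n + 1) k, c i • x (φ i)‖ - max ‖v‖ 1)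
      ≤ (max ‖v‖ 1) * (2 * ∑ i ∈ Finset.Icc (n+1) k, d i) := hP
    _ < (max ‖v‖ 1) * ε n := by
        apply mul_lt_mul_of_pos_left hfin
        have : (1:ℝ) ≤ max ‖v‖ 1 := le_max_right _ _
        linarith
    _ = ε n * max ‖v‖ 1 := mul_comm _ _
end

section
/- Let (xₙ) be a sequence in a Banach space X, (εₙ) a sequence of positive reals with εₙ → 0, and suppose that for all n, (1−εₙ) ≤ ‖xᵢ ± y‖ ≤ (1+εₙ) holds for every 1 ≤ i ≤ n and every y = Σ_{j=n+1}^{k} λⱼ xⱼ with max|λⱼ| = 1. Then the set {Σ_{i∈A, i≤n} xᵢ : n ∈ ℕ, A ⊆ ℕ} is bounded in X. -/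
open Filter Topology

theorem stmt11 {X : Type*} [NormedAddCommGroup X] [NormedSpace ℝ X] [CompleteSpace X]
    (x : ℕ → X) (hx : ∀ n, ‖x n‖ = 1)
    (ε : ℕ → ℝ) (hε : ∀ n, 0 < ε n) (hε0 : Tendsto ε atTop (𝓝 0))
    (hbd : ∀ n : ℕ, ∀ i : ℕ, 1 ≤ i → i ≤ n → ∀ k : ℕ, n < k → ∀ c : ℕ → ℝ,
      (∀ j ∈ Finset.Icc (n + 1) k, |c j| ≤ 1) →
      (∃ j ∈ Finset.Icc (n + 1) k, |c j| = 1) →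
      (1 - ε n ≤ ‖x i + ∑ j ∈ Finset.Icc (n + 1) k, c j • x j‖ ∧
        ‖x i + ∑ j ∈ Finset.Icc (n + 1) k, c j • x j‖ ≤ 1 + ε n) ∧
      (1 - ε n ≤ ‖x i - ∑ j ∈ Finset.Icc (n + 1) k, c j • x j‖ ∧
        ‖x i - ∑ j ∈ Finset.Icc (n + 1) k, c j • x j‖ ≤ 1 + ε n)) :
    ∃ M : ℝ, ∀ (n : ℕ) (A : Set ℕ),
      ‖∑ i ∈ Finset.Icc 1 n, A.indicator x i‖ ≤ M := by
  classical
  have hε1 : 0 < ε 1 := hε 1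
  refine ⟨2 + ε 1, ?_⟩
  intro n A
  -- norm of a single indicator term is ≤ 1
  have hind : ∀ i, ‖A.indicator x i‖ ≤ 1 := by
    intro i
    by_cases h : i ∈ A
    · simp [Set.indicator_of_mem h, hx i]
    · simp [Set.indicator_of_notMem h]
  rcases Nat.lt_or_ge n 2 with hn | hn
  · interval_cases n
    · simp; linarith
    · simp only [Finset.Icc_self, Finset.sum_singleton]
      have := hind 1
      linarith
  · -- n ≥ 2
    set c : ℕ → ℝ := fun j => if j ∈ A then 1 else 0 with hc
    have hsum : ∑ j ∈ Finset.Icc 2 n, c j • x j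
        = ∑ j ∈ Finset.Icc 2 n, A.indicator x j := by
      refine Finset.sum_congr rfl fun j _ => ?_
      by_cases h : j ∈ A <;> simp [hc, h, Set.indicator_of_mem, Set.indicator_of_notMem]
    have hsplit : ∑ i ∈ Finset.Icc 1 n, A.indicator x i
        = A.indicator x 1 + ∑ j ∈ Finset.Icc 2 n, A.indicator x j := by
      have h12 : Finset.Icc 1 n = insert 1 (Finset.Icc 2 n) := by
        ext j; simp; omega
      rw [h12, Finset.sum_insert (by simp)]
    by_cases hA : ∃ j ∈ Finset.Icc 2 n, j ∈ A
    · have key := hbd 1 1 le_rfl le_rfl n (by omega) c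
        (by intro j hj; by_cases h : j ∈ A <;> simp [hc, h])
        (by obtain ⟨j, hj, hjA⟩ := hA; exact ⟨j, hj, by simp [hc, hjA]⟩)
      have h2 : (1 + 1 : ℕ) = 2 := rfl
      rw [h2] at key
      have hub : ‖x 1 + ∑ j ∈ Finset.Icc 2 n, A.indicator x j‖ ≤ 1 + ε 1 := by
        rw [← hsum]; exact key.1.2
      by_cases h1 : 1 ∈ A
      · rw [hsplit, Set.indicator_of_mem h1]
        linarith
      · rw [hsplit, Set.indicator_of_notMem h1, zero_add]
        have : ∑ j ∈ Finset.Icc 2 n, A.indicator x j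
            = (x 1 + ∑ j ∈ Finset.Icc 2 n, A.indicator x j) - x 1 := by abel
        rw [this]
        calc ‖(x 1 + ∑ j ∈ Finset.Icc 2 n, A.indicator x j) - x 1‖
            ≤ ‖x 1 + ∑ j ∈ Finset.Icc 2 n, A.indicator x j‖ + ‖x 1‖ := norm_sub_le _ _
          _ ≤ 1 + ε 1 + 1 := by rw [hx 1]; linarith
          _ ≤ 2 + ε 1 := by linarith
    · push_neg at hA
      have hz : ∑ j ∈ Finset.Icc 2 n, A.indicator x j = 0 := by
        refine Finset.sum_eq_zero fun j hj => ?_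
        exact Set.indicator_of_notMem (hA j hj) x
      rw [hsplit, hz, add_zero]
      have := hind 1
      linarith
end
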